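/- Let Φ be an M×N unit-norm frame with N ≥ 2M whose columns sum to zero: ∑_{n=1}^N φ_n = 0. Then the average coherence satisfies ν ≤ μ/√M. -/

import Mathlib

/-!
Let `G = Φᴴ Φ` be the Gram matrix. Unit-norm columns summing to zero give `G` a unit diagonal
and vanishing row sums, so every off-diagonal row sum of `G` is `-1` and `ν = 1 / (N - 1)`.
On the other hand `∑ |G i j|² = ∑ |(Φ Φᴴ) a b|² ≥ (tr Φ Φᴴ)² / M = N² / M`, while the left side
is at most `N (1 + (N - 1) μ²)`: this is the Welch bound `μ² ≥ (N - M) / (M (N - 1))`.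
For `N ≥ 2M` one has `(N - M)(N - 1) ≥ M²`, which turns it into `μ² (N - 1)² ≥ M`.
-/

open Finset Matrix

namespace Matrix

variable {m n 𝕜 : Type*} [RCLike 𝕜]

theorem trace_conjTranspose_mul_self_eq_sum_norm_sq [Fintype m] [Fintype n] (A : Matrix m n 𝕜) :
    (Aᴴ * A).trace = ((∑ i, ∑ j, ‖A i j‖ ^ 2 : ℝ) : 𝕜) := by
  rw [trace, Finset.sum_comm]
  push_cast
  simp only [diag_apply, mul_apply, conjTranspose_apply, RCLike.star_def, RCLike.conj_mul]

theorem conjTranspose_mul_self_apply_self [Fintype m] (A : Matrix m n 𝕜) (j : n) :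
    (Aᴴ * A) j j = ((∑ i, ‖A i j‖ ^ 2 : ℝ) : 𝕜) := by
  push_cast
  simp only [mul_apply, conjTranspose_apply, RCLike.star_def, RCLike.conj_mul]

theorem mul_conjTranspose_self_apply_self [Fintype n] (A : Matrix m n 𝕜) (i : m) :
    (A * Aᴴ) i i = ((∑ j, ‖A i j‖ ^ 2 : ℝ) : 𝕜) := by
  simpa using conjTranspose_mul_self_apply_self Aᴴ i

theorem sum_norm_sq_conjTranspose_mul_self [Fintype m] [Fintype n] (A : Matrix m n 𝕜) :
    ∑ i, ∑ j, ‖(Aᴴ * A) i j‖ ^ 2 = ∑ i, ∑ j, ‖(A * Aᴴ) i j‖ ^ 2 := by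
  apply RCLike.ofReal_injective (K := 𝕜)
  rw [← trace_conjTranspose_mul_self_eq_sum_norm_sq, ← trace_conjTranspose_mul_self_eq_sum_norm_sq]
  simp only [conjTranspose_mul, conjTranspose_conjTranspose, Matrix.mul_assoc]
  rw [trace_mul_comm]
  simp only [Matrix.mul_assoc]

theorem sum_conjTranspose_mul_self_apply_eq_zero {R : Type*} [NonUnitalNonAssocSemiring R]
    [Star R] [Fintype m] [Fintype n] (A : Matrix m n R) (hA : ∀ i, ∑ j, A i j = 0) (k : n) :
    ∑ j, (Aᴴ * A) k j = 0 := by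
  simp only [mul_apply]
  rw [Finset.sum_comm]
  simp [← Finset.mul_sum, hA]

theorem card_sq_le_card_mul_sum_norm_sq_conjTranspose_mul_self [Fintype m] [Fintype n]
    (A : Matrix m n 𝕜) (hA : ∀ j, ∑ i, ‖A i j‖ ^ 2 = 1) :
    (Fintype.card n : ℝ) ^ 2 ≤ Fintype.card m * ∑ i, ∑ j, ‖(Aᴴ * A) i j‖ ^ 2 := by
  set r : m → ℝ := fun i ↦ ∑ j, ‖A i j‖ ^ 2
  have hr : ∑ i, r i = Fintype.card n := by
    simp only [r]
    rw [Finset.sum_comm]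
    simp [hA]
  have hdiag : ∀ i, r i ^ 2 = ‖(A * Aᴴ) i i‖ ^ 2 := fun i ↦ by
    rw [mul_conjTranspose_self_apply_self, RCLike.norm_ofReal, sq_abs]
  calc (Fintype.card n : ℝ) ^ 2 = (∑ i, r i) ^ 2 := by rw [hr]
    _ ≤ Fintype.card m * ∑ i, r i ^ 2 := by
      simpa using sq_sum_le_card_mul_sum_sq (s := univ) (f := r)
    _ ≤ Fintype.card m * ∑ i, ∑ j, ‖(A * Aᴴ) i j‖ ^ 2 := by
      gcongr with i
      rw [hdiag]
      exact single_le_sum (f := fun j ↦ ‖(A * Aᴴ) i j‖ ^ 2) (fun _ _ ↦ by positivity) (mem_univ i)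
    _ = Fintype.card m * ∑ i, ∑ j, ‖(Aᴴ * A) i j‖ ^ 2 := by
      rw [sum_norm_sq_conjTranspose_mul_self]

theorem sum_erase_conjTranspose_mul_self_apply_eq_neg_one [Fintype m] [Fintype n] [DecidableEq n]
    (A : Matrix m n 𝕜) (hA : ∀ j, ∑ i, ‖A i j‖ ^ 2 = 1) (hsum : ∀ i, ∑ j, A i j = 0) (k : n) :
    ∑ j ∈ univ.erase k, (Aᴴ * A) k j = -1 := by
  rw [sum_erase_eq_sub (mem_univ k), sum_conjTranspose_mul_self_apply_eq_zero A hsum,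
    conjTranspose_mul_self_apply_self, hA, RCLike.ofReal_one, zero_sub]

theorem sum_norm_sq_le_of_norm_diag_eq_one [Fintype n] (G : Matrix n n 𝕜) {μ : ℝ}
    (hdiag : ∀ i, ‖G i i‖ = 1) (hoff : ∀ i j, i ≠ j → ‖G i j‖ ≤ μ) :
    ∑ i, ∑ j, ‖G i j‖ ^ 2 ≤ Fintype.card n * (1 + (Fintype.card n - 1) * μ ^ 2) := by
  classical
  have hrow : ∀ i, ∑ j, ‖G i j‖ ^ 2 ≤ 1 + (Fintype.card n - 1) * μ ^ 2 := fun i ↦ by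
    rw [← add_sum_erase _ _ (mem_univ i), hdiag, one_pow]
    gcongr
    have hcard : (#(univ.erase i) : ℝ) = Fintype.card n - 1 := by
      rw [card_erase_of_mem (mem_univ i), card_univ,
        Nat.cast_sub (Fintype.card_pos_iff.2 ⟨i⟩), Nat.cast_one]
    rw [← hcard, ← nsmul_eq_mul]
    refine sum_le_card_nsmul _ _ _ fun j hj ↦ ?_
    exact pow_le_pow_left₀ (norm_nonneg _) (hoff i j (ne_of_mem_erase hj).symm) 2
  calc ∑ i, ∑ j, ‖G i j‖ ^ 2 ≤ ∑ _i : n, (1 + (Fintype.card n - 1) * μ ^ 2) :=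
        sum_le_sum fun i _ ↦ hrow i
    _ = Fintype.card n * (1 + (Fintype.card n - 1) * μ ^ 2) := by
      rw [sum_const, card_univ, nsmul_eq_mul]

theorem welch_bound [Fintype m] [Fintype n] [Nonempty n] (A : Matrix m n 𝕜)
    (hA : ∀ j, ∑ i, ‖A i j‖ ^ 2 = 1) {μ : ℝ} (hμ : ∀ i j, i ≠ j → ‖(Aᴴ * A) i j‖ ≤ μ) :
    (Fintype.card n : ℝ) - Fintype.card m ≤ Fintype.card m * (Fintype.card n - 1) * μ ^ 2 := by
  have hdiag : ∀ i, ‖(Aᴴ * A) i i‖ = 1 := by simp [conjTranspose_mul_self_apply_self, hA]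
  have hN : 0 < (Fintype.card n : ℝ) := by exact_mod_cast Fintype.card_pos
  have h : (Fintype.card n : ℝ) * Fintype.card n ≤
      Fintype.card n * (Fintype.card m * (1 + (Fintype.card n - 1) * μ ^ 2)) := by
    calc (Fintype.card n : ℝ) * Fintype.card n = (Fintype.card n : ℝ) ^ 2 := by ring
      _ ≤ Fintype.card m * ∑ i, ∑ j, ‖(Aᴴ * A) i j‖ ^ 2 :=
        card_sq_le_card_mul_sum_norm_sq_conjTranspose_mul_self A hA
      _ ≤ Fintype.card m * (Fintype.card n * (1 + (Fintype.card n - 1) * μ ^ 2)) := by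
        gcongr
        exact sum_norm_sq_le_of_norm_diag_eq_one _ hdiag hμ
      _ = _ := by ring
  linarith [le_of_mul_le_mul_left h hN]

end Matrix

theorem one_div_sub_one_le_div_sqrt {M N μ : ℝ} (hM : 1 ≤ M) (hN : 2 * M ≤ N) (hμ : 0 ≤ μ)
    (hW : N - M ≤ M * (N - 1) * μ ^ 2) : 1 / (N - 1) ≤ μ / √M := by
  have hN1 : 0 < N - 1 := by linarith
  have hMN : M ^ 2 ≤ (N - M) * (N - 1) := by nlinarith
  have hsq : M ≤ (μ * (N - 1)) ^ 2 := by
    refine le_of_mul_le_mul_left ?_ (by linarith : 0 < M)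
    nlinarith
  rw [div_le_div_iff₀ hN1 (Real.sqrt_pos.2 (by linarith)), one_mul]
  exact Real.sqrt_le_iff.2 ⟨by positivity, hsq⟩

/-- If `Φ` is an `M × N` unit-norm frame with `N ≥ 2M` whose columns
sum to zero, then the average coherence satisfies `ν ≤ μ/√M`, where `μ` is the
worst-case coherence. -/
theorem stmt_18 (M N : ℕ) (hM : 1 ≤ M) (hN : 2 * M ≤ N)
    (Φ : Matrix (Fin M) (Fin N) ℂ)
    (hunit : ∀ n : Fin N, ∑ m : Fin M, ‖Φ m n‖ ^ 2 = 1)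
    (hzero : ∀ m : Fin M, ∑ n : Fin N, Φ m n = 0)
    (μ : ℝ)
    (hμ : IsGreatest {t : ℝ | ∃ i j : Fin N, i ≠ j ∧
        t = ‖∑ m : Fin M, (starRingEnd ℂ) (Φ m i) * Φ m j‖} μ) :
    ∀ i : Fin N,
      (1 / ((N : ℝ) - 1)) * ‖
          (∑ j ∈ Finset.univ.erase i, ∑ m : Fin M, (starRingEnd ℂ) (Φ m i) * Φ m j)‖
        ≤ μ / Real.sqrt M := by
  intro i
  have hgram : ∀ a b, ∑ m, (starRingEnd ℂ) (Φ m a) * Φ m b = (Φᴴ * Φ) a b := fun a b ↦ by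
    simp [mul_apply]
  have hμ0 : 0 ≤ μ := by
    obtain ⟨a, b, -, rfl⟩ := hμ.1
    positivity
  have : Nonempty (Fin N) := ⟨i⟩
  have hW := welch_bound Φ hunit fun a b hab ↦ hμ.2 ⟨a, b, hab, by rw [hgram]⟩
  rw [Fintype.card_fin, Fintype.card_fin] at hW
  simp only [hgram, sum_erase_conjTranspose_mul_self_apply_eq_neg_one Φ hunit hzero, norm_neg,
    norm_one, mul_one]
  exact one_div_sub_one_le_div_sqrt (by exact_mod_cast hM) (by exact_mod_cast hN) hμ0 hW
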